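/- arXiv:1611.00246 — 7 statements merged into one kernel-verified Lean document; each statement's English description precedes it below -/
import Mathlib

section
/- Each cycle of length at least 4 in a chordal graph has at least two nonconsecutive vertices each of which is opposite to a chord of the cycle; that is, there exist two vertices on the cycle which are not adjacent along the cycle such that, for each of them, the vertex immediately preceding it and the vertex immediately following it on the cycle are adjacent in the graph. -/
/-- The underlying graph of a digraph given by arc relation `A`. -/
def underlyingGraph {V : Type*} (A : V → V → Prop) : SimpleGraph V where
  Adj x y := x ≠ y ∧ (A x y ∨ A y x)
  symm := by
    constructor
    intro x y ⟨h, h'⟩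
    exact ⟨h.symm, h'.symm⟩
  loopless := by
    constructor
    intro x ⟨h, _⟩
    exact h rfl

/-- The competition graph of a digraph given by arc relation `A`. -/
def competitionGraph {V : Type*} (A : V → V → Prop) : SimpleGraph V where
  Adj x y := x ≠ y ∧ ∃ w, A x w ∧ A y w
  symm := by
    constructor
    intro x y ⟨h, w, h1, h2⟩
    exact ⟨h.symm, w, h2, h1⟩
  loopless := by
    constructor
    intro x ⟨h, _⟩
    exact h rfl

/-- The phylogeny graph of a digraph given by arc relation `A`. -/
def phylogenyGraph {V : Type*} (A : V → V → Prop) : SimpleGraph V :=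
  underlyingGraph A ⊔ competitionGraph A

/-- A `(i,j)` digraph: a (finite, simple) acyclic digraph in which every vertex has
indegree at most `i` and outdegree at most `j`. -/
def IsIJDigraph {V : Type*} (i j : ℕ) (A : V → V → Prop) : Prop :=
  (∀ v : V, ¬ Relation.TransGen A v v) ∧
  (∀ v : V, {u | A u v}.ncard ≤ i) ∧
  (∀ v : V, {u | A v u}.ncard ≤ j)

/-- An edge of the phylogeny graph is a *cared edge* if it belongs to the competition
graph but not to the underlying graph. -/
def CaredEdge {V : Type*} (A : V → V → Prop) (x y : V) : Prop :=
  (competitionGraph A).Adj x y ∧ ¬ (underlyingGraph A).Adj x y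

/-- A cycle in a graph is a *hole* if it has length at least `4` and is induced. -/
def IsHole {V : Type*} (G : SimpleGraph V) {v : V} (c : G.Walk v v) : Prop :=
  c.IsCycle ∧ 4 ≤ c.length ∧
    ∀ x ∈ c.support, ∀ y ∈ c.support, G.Adj x y → s(x, y) ∈ c.edges

/-- A graph is *chordal* if every cycle of length at least `4` has a chord, i.e.
the graph has no hole. -/
def IsChordal {V : Type*} (G : SimpleGraph V) : Prop :=
  ∀ (v : V) (c : G.Walk v v), c.IsCycle → 4 ≤ c.length →
    ∃ x ∈ c.support, ∃ y ∈ c.support, G.Adj x y ∧ s(x, y) ∉ c.edges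

/-!
A chord of the cycle splits it into two arcs, each a path of length at least 2 with adjacent
endpoints. If such a path has length 2, its middle vertex is opposite to a chord; otherwise it
closes up to a cycle of length at least 4, and a chord of that cycle spans a strictly shorter
subpath with adjacent endpoints. By induction on the length, each arc has a vertex opposite to a
chord strictly inside it, and these two vertices are distinct and not consecutive on the cycle.
-/

namespace SimpleGraph.Walk

variable {V : Type*} {G : SimpleGraph V}

lemma mk_getVert_mem_edges {u v : V} (p : G.Walk u v) {i : ℕ} (hi : i < p.length) :
    s(p.getVert i, p.getVert (i + 1)) ∈ p.edges :=
  p.mk_mem_edges_iff_exists.2 ⟨i, hi, rfl⟩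

lemma IsCycle.exists_lt_length_getVert_eq {u x : V} {c : G.Walk u u} (hc : c.IsCycle)
    (hx : x ∈ c.support) : ∃ k < c.length, c.getVert k = x := by
  obtain ⟨k, rfl, hk⟩ := mem_support_iff_exists_getVert.1 hx
  rcases hk.lt_or_eq with hk | rfl
  · exact ⟨k, hk, rfl⟩
  · exact ⟨0, by have := hc.three_le_length; omega, by simp⟩

lemma IsCycle.support_idxOf_getVert [DecidableEq V] {u : V} {c : G.Walk u u}
    (hc : c.IsCycle) {k : ℕ} (hk : k < c.length) : c.support.idxOf (c.getVert k) = k := by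
  rcases Nat.eq_zero_or_pos k with rfl | hk0
  · rw [← cons_tail_support, getVert_zero, List.idxOf_cons_self]
  have hne : u ≠ c.getVert k := fun h => by
    have := hc.getVert_injOn' (show 0 ≤ c.length - 1 by omega) (show k ≤ c.length - 1 by omega)
      (by simpa using h)
    omega
  have htail : c.getVert k = c.support.tail[k - 1]'(by simp; omega) := by
    rw [getVert_eq_support_getElem _ hk.le, List.getElem_tail]
    congr 1; omega
  rw [← cons_tail_support, List.idxOf_cons_ne _ hne, htail, hc.support_nodup.idxOf_getElem]
  omega

lemma IsCycle.getVert_rotate [DecidableEq V] {u : V} {c : G.Walk u u} (hc : c.IsCycle)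
    {k m : ℕ} (hk : k < c.length) (hm : m ≤ c.length) :
    (c.rotate (c.getVert k) (c.getVert_mem_support k)).getVert m =
      c.getVert ((k + m) % c.length) := by
  rw [rotate, getVert_append, dropUntil_eq_drop, takeUntil_eq_take]
  simp only [getVert_copy, length_copy, drop_length, drop_getVert, take_getVert,
    hc.support_idxOf_getVert hk]
  split_ifs
  · rw [Nat.mod_eq_of_lt (by omega)]
  · rw [Nat.mod_eq_sub_mod (by omega), Nat.mod_eq_of_lt (by omega)]
    congr 1; omega

def IsOppositeToChord {u : V} (c : G.Walk u u) (i : ℕ) : Prop :=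
  G.Adj (c.getVert ((i + c.length - 1) % c.length)) (c.getVert ((i + 1) % c.length))

lemma isOppositeToChord_mod {u : V} (c : G.Walk u u) (i : ℕ) :
    c.IsOppositeToChord (i % c.length) ↔ c.IsOppositeToChord i := by
  rcases Nat.eq_zero_or_pos c.length with h | h
  · simp [h]
  have hpred : (i % c.length + c.length - 1) % c.length = (i + c.length - 1) % c.length := by
    rw [Nat.add_sub_assoc h, Nat.add_sub_assoc h, Nat.mod_add_mod]
  rw [IsOppositeToChord, IsOppositeToChord, hpred, Nat.mod_add_mod]

end SimpleGraph.Walk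

namespace IsChordal

open SimpleGraph Walk

variable {V : Type*} {G : SimpleGraph V}

theorem exists_chord_getVert (hG : IsChordal G) {u : V} {c : G.Walk u u}
    (hc : c.IsCycle) (hlen : 4 ≤ c.length) :
    ∃ p q, p + 2 ≤ q ∧ q + 2 ≤ p + c.length ∧ q < c.length ∧
      G.Adj (c.getVert p) (c.getVert q) := by
  obtain ⟨x, hx, y, hy, hxy, hchord⟩ := hG u c hc hlen
  obtain ⟨p, hp, rfl⟩ := hc.exists_lt_length_getVert_eq hx
  obtain ⟨q, hq, rfl⟩ := hc.exists_lt_length_getVert_eq hy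
  clear hx hy
  wlog hpq : p < q generalizing p q
  · have hqp : q < p := (not_lt.1 hpq).lt_of_ne fun h => hxy.ne (h ▸ rfl)
    exact this q hq p hp hxy.symm (Sym2.eq_swap ▸ hchord) hqp
  refine ⟨p, q, ?_, ?_, hq, hxy⟩
  · by_contra
    obtain rfl : q = p + 1 := by omega
    exact hchord (c.mk_getVert_mem_edges (by omega))
  · by_contra
    obtain ⟨rfl, rfl⟩ : p = 0 ∧ q = c.length - 1 := by omega
    have hlast := c.mk_getVert_mem_edges (i := c.length - 1) (by omega)
    rw [Nat.sub_add_cancel (by omega), getVert_length] at hlast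
    rw [c.getVert_zero, Sym2.eq_swap] at hchord
    exact hchord hlast

theorem exists_adj_getVert_pred_succ (hG : IsChordal G) {u w : V} {p : G.Walk u w}
    (hp : p.IsPath) (h2 : 2 ≤ p.length) (hwu : G.Adj w u) :
    ∃ i, 0 < i ∧ i < p.length ∧ G.Adj (p.getVert (i - 1)) (p.getVert (i + 1)) := by
  induction hn : p.length using Nat.strong_induction_on generalizing u w p with
  | _ n ih =>
  subst hn
  rcases h2.eq_or_lt with hlen2 | hlen3
  · exact ⟨1, by omega, by omega, by simpa [hlen2.symm ▸ p.getVert_length] using hwu.symm⟩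
  have hcyc : (cons hwu p).IsCycle := (cons_isCycle_iff p hwu).2
    ⟨hp, fun he => by have := hp.length_eq_one_of_mem_edges (Sym2.eq_swap ▸ he); omega⟩
  obtain ⟨p', q', hpq, hqp, hq, hadj⟩ := hG.exists_chord_getVert hcyc (by simp; omega)
  obtain ⟨i, j, hij, hj, hshort, hxy⟩ :
      ∃ i j, i + 2 ≤ j ∧ j ≤ p.length ∧ j - i < p.length ∧
        G.Adj (p.getVert i) (p.getVert j) := by
    rw [getVert_cons _ _ (by omega : q' ≠ 0)] at hadj
    rcases Nat.eq_zero_or_pos p' with rfl | hp'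
    · refine ⟨q' - 1, p.length, by simp at hqp; omega, le_rfl, by omega, ?_⟩
      simpa using hadj.symm
    · rw [getVert_cons _ _ hp'.ne'] at hadj
      exact ⟨p' - 1, q' - 1, by omega, by simp at hq; omega, by simp at hqp; omega, hadj⟩
  have hqlen : ((p.take j).drop i).length = j - i := by simp; omega
  have hqvert : ∀ m ≤ j - i, ((p.take j).drop i).getVert m = p.getVert (i + m) := by
    intro m hm
    simp [Nat.min_eq_right (show i + m ≤ j by omega)]
  obtain ⟨k, hk0, hklt, hkadj⟩ := ih (j - i) hshort ((hp.take j).drop i) (by omega)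
    (by simpa [Nat.min_eq_right (show i ≤ j by omega)] using hxy.symm) hqlen
  refine ⟨i + k, by omega, by omega, ?_⟩
  rw [hqvert _ (by omega), hqvert _ (by omega)] at hkadj
  simpa [show i + (k - 1) = i + k - 1 by omega, add_assoc] using hkadj

theorem exists_isOppositeToChord (hG : IsChordal G) {u : V} {c : G.Walk u u}
    (hc : c.IsCycle) {a d : ℕ} (hd : 2 ≤ d) (hdn : d < c.length)
    (hadj : G.Adj (c.getVert (a % c.length)) (c.getVert ((a + d) % c.length))) :
    ∃ x, a < x ∧ x < a + d ∧ c.IsOppositeToChord x := by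
  classical
  have hn : 0 < c.length := by omega
  set r := c.rotate (c.getVert (a % c.length)) (c.getVert_mem_support _)
  have hr : ∀ m ≤ c.length, r.getVert m = c.getVert ((a + m) % c.length) := fun m hm => by
    rw [hc.getVert_rotate (Nat.mod_lt _ hn) hm, Nat.mod_add_mod]
  have hpath : (r.take d).IsPath := (hc.rotate _).isPath_take (by simpa [r] using hdn)
  have hlen : (r.take d).length = d := by simp [r]; omega
  obtain ⟨t, ht0, htd, hadj'⟩ := hG.exists_adj_getVert_pred_succ hpath (by omega)
    (by rw [hr d hdn.le]; exact hadj.symm)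
  rw [hlen] at htd
  refine ⟨a + t, by omega, by omega, ?_⟩
  simp only [take_getVert] at hadj'
  rw [hr _ (by omega), hr _ (by omega)] at hadj'
  rw [IsOppositeToChord, show a + t + c.length - 1 = a + (t - 1) + c.length by omega,
    Nat.add_mod_right]
  simpa [Nat.min_eq_right (show t - 1 ≤ d by omega), Nat.min_eq_right (show t + 1 ≤ d by omega),
    add_assoc] using hadj'

end IsChordal

/-- Each cycle of length at least `4` in a chordal graph has at least two
nonconsecutive vertices each of which is opposite to a chord of the cycle:
there are two distinct, nonconsecutive positions `i`, `j` on the cycle such that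
for each of them, the vertex immediately preceding it and the vertex immediately
following it on the cycle are adjacent in the graph. -/
theorem stmt_2 {V : Type*} (G : SimpleGraph V) (hG : IsChordal G)
    (v : V) (c : G.Walk v v) (hc : c.IsCycle) (hlen : 4 ≤ c.length) :
    ∃ i j, i < c.length ∧ j < c.length ∧
      c.getVert i ≠ c.getVert j ∧
      (i + 1) % c.length ≠ j ∧ (j + 1) % c.length ≠ i ∧
      G.Adj (c.getVert ((i + c.length - 1) % c.length)) (c.getVert ((i + 1) % c.length)) ∧
      G.Adj (c.getVert ((j + c.length - 1) % c.length)) (c.getVert ((j + 1) % c.length)) := by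
  obtain ⟨p, q, hpq, hqp, hq, hadj⟩ := hG.exists_chord_getVert hc hlen
  have hp : p < c.length := by omega
  obtain ⟨i, hpi, hiq, hi⟩ := hG.exists_isOppositeToChord hc (a := p) (d := q - p) (by omega)
    (by omega) (by rwa [Nat.add_sub_cancel' (by omega), Nat.mod_eq_of_lt hp, Nat.mod_eq_of_lt hq])
  obtain ⟨j, hqj, hjp, hj⟩ := hG.exists_isOppositeToChord hc (a := q) (d := p + c.length - q)
    (by omega) (by omega) (by
      rw [Nat.add_sub_cancel' (by omega), Nat.mod_eq_of_lt hq, Nat.add_mod_right,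
        Nat.mod_eq_of_lt hp]
      exact hadj.symm)
  have hj' :
      j % c.length = j ∧ j < c.length ∨ j % c.length = j - c.length ∧ c.length ≤ j := by
    rcases Nat.lt_or_ge j c.length with h | h
    · exact .inl ⟨Nat.mod_eq_of_lt h, h⟩
    · exact .inr ⟨by rw [Nat.mod_eq_sub_mod h, Nat.mod_eq_of_lt (by omega)], h⟩
  have hi1 : (i + 1) % c.length = i + 1 := Nat.mod_eq_of_lt (by omega)
  refine ⟨i, j % c.length, by omega, Nat.mod_lt _ (by omega), fun h => ?_, ?_, ?_, hi,
    (c.isOppositeToChord_mod j).2 hj⟩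
  · have := hc.getVert_injOn' (show i ≤ c.length - 1 by omega)
      (show j % c.length ≤ c.length - 1 by omega) h
    omega
  · omega
  · rw [Nat.mod_add_mod]
    rcases Nat.lt_or_ge (j + 1) c.length with h | h
    · rw [Nat.mod_eq_of_lt h]; omega
    · rw [Nat.mod_eq_sub_mod h, Nat.mod_eq_of_lt (by omega)]; omega
end

section
/- If a chordal graph in which every vertex has degree at most four contains a cycle of length 7, then it contains a W-configuration as a subgraph. -/
/-- The W-configuration: the graph on vertices `v₁, …, v₇` with `vᵢ` adjacent to `vⱼ`
if and only if `i ≠ j` and `|i - j| ≤ 2`. -/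
def WConfiguration : SimpleGraph (Fin 7) where
  Adj i j := i ≠ j ∧ i.val ≤ j.val + 2 ∧ j.val ≤ i.val + 2
  symm := by
    constructor
    intro i j ⟨h, h1, h2⟩
    exact ⟨h.symm, h2, h1⟩
  loopless := by
    constructor
    intro i ⟨h, _⟩
    exact h rfl

/-!
Every edge or chord `uv` of a cycle in a chordal graph spans a triangle `uvw` with `w` on a chosen
arc of the cycle: a chord of the cycle formed by `uv` and that arc shortcuts the arc, so one inducts
on its length. On a 7-cycle `x₀ … x₆` in a graph of maximum degree four, each `xᵢ` is incident
with at most two chords. A triangle on a cycle edge yields a chord, and a triangle on a chord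
between vertices at distance two yields one between vertices at distance three, say `x₀x₃`. The
triangles on both sides of `x₀x₃`, and on the chords they produce, pruned by the degree bound,
leave (up to reflection) the chords `x₀x₃, x₀x₄, x₄x₆, x₁x₃`. This triangulation of the heptagon
is the square of the path `x₅ x₆ x₄ x₀ x₃ x₁ x₂`, i.e. a W-configuration.
-/

namespace SimpleGraph.Walk

variable {V : Type*} {G : SimpleGraph V}

theorem exists_isPath_shortcut {u v : V} (p : G.Walk u v) {i j : ℕ} (hij : i + 1 < j)
    (hj : j ≤ p.length) (h : G.Adj (p.getVert i) (p.getVert j)) :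
    ∃ q : G.Walk u v, q.IsPath ∧ q.length < p.length ∧ q.support ⊆ p.support ∧
      q.edges ⊆ s(p.getVert i, p.getVert j) :: p.edges := by
  classical
  obtain ⟨r, hlen, hsupp, hedges⟩ : ∃ r : G.Walk u v, r.length < p.length ∧
      r.support ⊆ p.support ∧ r.edges ⊆ s(p.getVert i, p.getVert j) :: p.edges := by
    refine ⟨(p.take i).append (cons h (p.drop j)), ?_, fun w hw => ?_, fun e he => ?_⟩
    · simp only [length_append, length_cons, take_length, drop_length]
      omega
    · rw [mem_support_append_iff, support_cons, List.mem_cons] at hw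
      rcases hw with hw | rfl | hw
      · exact List.mem_of_mem_take (p.support_take i ▸ hw)
      · exact p.getVert_mem_support i
      · exact List.mem_of_mem_drop (p.drop_support_eq_support_drop_min j ▸ hw)
    · rw [edges_append, edges_cons, List.mem_append, List.mem_cons, edges_take, edges_drop] at he
      rcases he with he | rfl | he
      · exact List.mem_cons_of_mem _ (List.mem_of_mem_take he)
      · exact List.mem_cons_self
      · exact List.mem_cons_of_mem _ (List.mem_of_mem_drop he)
  exact ⟨r.bypass, r.bypass_isPath, r.length_bypass_le_length.trans_lt hlen,
    List.Subset.trans r.support_bypass_subset_support hsupp,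
    List.Subset.trans r.edges_bypass_subset_edges hedges⟩

def ofSeq (f : ℕ → V) (hf : ∀ j, G.Adj (f j) (f (j + 1))) : (n : ℕ) → G.Walk (f 0) (f n)
  | 0 => nil
  | n + 1 => (ofSeq f hf n).concat (hf n)

variable {f : ℕ → V} {hf : ∀ j, G.Adj (f j) (f (j + 1))}

@[simp]
theorem length_ofSeq (n : ℕ) : (ofSeq f hf n).length = n := by
  induction n with
  | zero => rfl
  | succ n ih => simp [ofSeq, ih]

theorem support_ofSeq (n : ℕ) : (ofSeq f hf n).support = (List.range (n + 1)).map f := by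
  induction n with
  | zero => rfl
  | succ n ih => simp [ofSeq, ih, List.range_succ]

theorem isPath_ofSeq {n : ℕ} (hinj : Set.InjOn f (Set.Iic n)) : (ofSeq f hf n).IsPath := by
  rw [isPath_def, support_ofSeq]
  refine (List.nodup_range).map_on fun a ha b hb hab => hinj ?_ ?_ hab <;>
    simp_all

end SimpleGraph.Walk

section

open SimpleGraph

variable {V : Type*} {G : SimpleGraph V}

theorem IsChordal.exists_shorter_isPath (hG : IsChordal G) {u v : V} (huv : G.Adj u v)
    {p : G.Walk u v} (hp : p.IsPath) (hlen : 3 ≤ p.length) :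
    ∃ q : G.Walk u v, q.IsPath ∧ 2 ≤ q.length ∧ q.length < p.length ∧ q.support ⊆ p.support := by
  have hvu : s(v, u) ∉ p.edges := fun h => by
    have := hp.length_eq_one_of_mem_edges (Sym2.eq_swap ▸ h)
    omega
  obtain ⟨x, hx, y, hy, hxy, hchord⟩ :=
    hG v _ ((Walk.cons_isCycle_iff p huv.symm).mpr ⟨hp, hvu⟩) (by rw [Walk.length_cons]; omega)
  rw [Walk.support_cons, List.mem_cons] at hx hy
  rw [Walk.edges_cons, List.mem_cons, not_or] at hchord
  obtain ⟨i, rfl, hi⟩ :=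
    Walk.mem_support_iff_exists_getVert.mp (hx.elim (· ▸ p.end_mem_support) id)
  obtain ⟨j, rfl, hj⟩ :=
    Walk.mem_support_iff_exists_getVert.mp (hy.elim (· ▸ p.end_mem_support) id)
  clear hx hy
  wlog hij : i < j generalizing i j
  · refine this j hj i hi hxy.symm ?_ ?_
    · rwa [Sym2.eq_swap]
    · have : i ≠ j := fun h => hxy.ne (h ▸ rfl)
      omega
  have hgap : i + 1 < j := by
    refine lt_of_le_of_ne hij fun h => hchord.2 ?_
    exact (Walk.mk_mem_edges_iff_exists p).mpr ⟨i, by omega, h ▸ rfl⟩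
  obtain ⟨q, hq, hqlen, hqsupp, hqedges⟩ := p.exists_isPath_shortcut hgap hj hxy
  refine ⟨q, hq, ?_, hqlen, hqsupp⟩
  by_contra! hlt
  interval_cases h : q.length
  · exact huv.ne (Walk.eq_of_length_eq_zero h)
  · have huv' : s(u, v) ∈ q.edges := by
      simpa [Walk.snd, q.getVert_of_length_le h.le] using
        q.mk_start_snd_mem_edges (Walk.not_nil_of_ne huv.ne)
    rcases List.mem_cons.mp (hqedges huv') with h | h
    · exact hchord.1 (by rw [← h, Sym2.eq_swap])
    · exact hvu (by rwa [Sym2.eq_swap])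

theorem IsChordal.exists_adj_adj_of_isPath (hG : IsChordal G) {u v : V} (huv : G.Adj u v)
    {p : G.Walk u v} (hp : p.IsPath) (hlen : 2 ≤ p.length) :
    ∃ w ∈ p.support, G.Adj u w ∧ G.Adj w v := by
  induction hn : p.length using Nat.strong_induction_on generalizing p with
  | _ n ih =>
  subst hn
  rcases hlen.eq_or_lt with h2 | h3
  · have h0 := p.adj_getVert_succ (i := 0) (by omega)
    have h1 := p.adj_getVert_succ (i := 1) (by omega)
    rw [Walk.getVert_zero] at h0
    rw [show 1 + 1 = p.length by omega, Walk.getVert_length] at h1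
    exact ⟨p.getVert 1, p.getVert_mem_support 1, h0, h1⟩
  obtain ⟨q, hq, hq2, hqlen, hqsupp⟩ := hG.exists_shorter_isPath huv hp h3
  obtain ⟨w, hw, huw, hwv⟩ := ih q.length hqlen hq hq2 rfl
  exact ⟨w, hqsupp hw, huw, hwv⟩

open Fin.NatCast in
theorem IsChordal.exists_adj_adj_of_cycle {n : ℕ} [NeZero n] (hG : IsChordal G) {x : Fin n → V}
    (hx : Function.Injective x) (hadj : ∀ i, G.Adj (x i) (x (i + 1))) (i : Fin n) {k : ℕ}
    (hk : 2 ≤ k) (hkn : k < n) (h : G.Adj (x i) (x (i + (k : Fin n)))) :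
    ∃ m, 0 < m ∧ m < k ∧
      G.Adj (x i) (x (i + (m : Fin n))) ∧ G.Adj (x (i + (m : Fin n))) (x (i + (k : Fin n))) := by
  have hf : ∀ j : ℕ, G.Adj (x (i + (j : Fin n))) (x (i + ((j + 1 : ℕ) : Fin n))) := fun j => by
    simpa [add_assoc] using hadj (i + j)
  have hinj : Set.InjOn (fun j : ℕ => x (i + (j : Fin n))) (Set.Iic k) := fun a ha b hb hab => by
    have := Fin.val_eq_of_eq (add_left_cancel (hx hab))
    simp only [Fin.val_natCast] at this
    rwa [Nat.mod_eq_of_lt ((Set.mem_Iic.mp ha).trans_lt hkn),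
      Nat.mod_eq_of_lt ((Set.mem_Iic.mp hb).trans_lt hkn)] at this
  obtain ⟨w, hw, h0w, hwk⟩ := hG.exists_adj_adj_of_isPath (p := Walk.ofSeq _ hf k)
    (by simpa using h) (Walk.isPath_ofSeq hinj) (by simpa using hk)
  rw [Walk.support_ofSeq, List.mem_map] at hw
  obtain ⟨m, hm, rfl⟩ := hw
  rw [List.mem_range] at hm
  refine ⟨m, Nat.pos_of_ne_zero ?_, lt_of_le_of_ne (by omega) ?_, by simpa using h0w, hwk⟩
  · rintro rfl
    exact h0w.ne rfl
  · rintro rfl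
    exact hwk.ne rfl

theorem card_le_ncard_neighborSet [Finite V] {ι : Type*} {x : ι → V}
    (hx : Function.Injective x) {v : V} {s : Finset ι} (h : ∀ a ∈ s, G.Adj v (x a)) :
    s.card ≤ (G.neighborSet v).ncard := by
  classical
  rw [← Finset.card_image_of_injective s hx, ← Set.ncard_coe_finset]
  exact Set.ncard_le_ncard (by simpa [Set.subset_def] using h) (Set.toFinite _)

theorem wConfiguration_isContained_of_adj {y : Fin 7 → V} (hy : Function.Injective y)
    (h : ∀ i j : Fin 7, i < j → j.val ≤ i.val + 2 → G.Adj (y i) (y j)) :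
    WConfiguration ⊑ G := by
  refine ⟨⟨⟨y, fun {i j} hij => ?_⟩, hy⟩⟩
  obtain ⟨hne, hij, hji⟩ := hij
  rcases hne.lt_or_gt with hlt | hlt
  · exact h i j hlt hji
  · exact (h j i hlt hij).symm

section Heptagon

variable {x : Fin 7 → V}

theorem false_of_three_chords [Finite V] (hdeg : ∀ v : V, (G.neighborSet v).ncard ≤ 4)
    (hx : Function.Injective x) (hadj : ∀ i, G.Adj (x i) (x (i + 1))) {i a b c : Fin 7}
    (hne : [i - 1, i + 1, a, b, c].Nodup) (ha : G.Adj (x i) (x a)) (hb : G.Adj (x i) (x b))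
    (hc : G.Adj (x i) (x c)) : False := by
  have hcard := card_le_ncard_neighborSet (G := G) hx (v := x i)
    (s := [i - 1, i + 1, a, b, c].toFinset)
    (by simpa [ha, hb, hc, hadj i] using (hadj (i - 1)).symm)
  have := (List.toFinset_card_of_nodup hne ▸ hcard).trans (hdeg (x i))
  simp at this

theorem wConfiguration_isContained_of_chords (hx : Function.Injective x)
    (hadj : ∀ i, G.Adj (x i) (x (i + 1))) (h03 : G.Adj (x 0) (x 3)) (h04 : G.Adj (x 0) (x 4))
    (h46 : G.Adj (x 4) (x 6)) (h13 : G.Adj (x 1) (x 3)) : WConfiguration ⊑ G := by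
  refine wConfiguration_isContained_of_adj (y := x ∘ ![5, 6, 4, 0, 3, 1, 2])
    (hx.comp (by decide)) fun i j hij hji => ?_
  fin_cases i <;> fin_cases j <;> simp at hij hji ⊢
  exacts [hadj 5, (hadj 4).symm, h46.symm, hadj 6, h04.symm, (hadj 3).symm, h03, hadj 0,
    h13.symm, (hadj 2).symm, hadj 1]

theorem wConfiguration_isContained_of_adj_zero_three_four [Finite V] (hG : IsChordal G)
    (hdeg : ∀ v : V, (G.neighborSet v).ncard ≤ 4) (hx : Function.Injective x)
    (hadj : ∀ i, G.Adj (x i) (x (i + 1))) (h03 : G.Adj (x 0) (x 3)) (h04 : G.Adj (x 0) (x 4)) :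
    WConfiguration ⊑ G := by
  obtain ⟨m, hm₁, hm₂, h4m, hm0⟩ := hG.exists_adj_adj_of_cycle hx hadj 4 (k := 3) (by norm_num)
    (by norm_num) (by simpa using h04.symm)
  interval_cases m <;> simp only [Nat.cast_ofNat, Fin.isValue, Fin.reduceAdd] at h4m hm0
  · exact (false_of_three_chords hdeg hx hadj (i := 0) (by decide) h03 h04 hm0.symm).elim
  obtain ⟨n, hn₁, hn₂, h0n, hn3⟩ := hG.exists_adj_adj_of_cycle hx hadj 0 (k := 3) (by norm_num)
    (by norm_num) (by simpa using h03)
  interval_cases n <;> simp only [Nat.cast_ofNat, Fin.isValue, zero_add] at h0n hn3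
  · exact wConfiguration_isContained_of_chords hx hadj h03 h04 h4m hn3
  · exact (false_of_three_chords hdeg hx hadj (i := 0) (by decide) h03 h04 h0n).elim

theorem wConfiguration_isContained_of_adj_zero_three [Finite V] (hG : IsChordal G)
    (hdeg : ∀ v : V, (G.neighborSet v).ncard ≤ 4) (hx : Function.Injective x)
    (hadj : ∀ i, G.Adj (x i) (x (i + 1))) (h03 : G.Adj (x 0) (x 3)) : WConfiguration ⊑ G := by
  obtain ⟨m, hm₁, hm₂, h3m, hm0⟩ := hG.exists_adj_adj_of_cycle hx hadj 3 (k := 4) (by norm_num)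
    (by norm_num) (by simpa using h03.symm)
  interval_cases m <;> simp only [Nat.cast_ofNat, Fin.isValue, Fin.reduceAdd] at h3m hm0
  · exact wConfiguration_isContained_of_adj_zero_three_four hG hdeg hx hadj h03 hm0.symm
  · obtain ⟨n, hn₁, hn₂, h0n, hn3⟩ := hG.exists_adj_adj_of_cycle hx hadj 0 (k := 3)
      (by norm_num) (by norm_num) (by simpa using h03)
    interval_cases n <;> simp only [Nat.cast_ofNat, Fin.isValue, zero_add] at h0n hn3
    · exact (false_of_three_chords hdeg hx hadj (i := 3) (by decide) h03.symm h3m hn3.symm).elim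
    · exact (false_of_three_chords hdeg hx hadj (i := 0) (by decide) h03 hm0.symm h0n).elim
  · -- the reflection `i ↦ 3 - i` fixes the chord `x 0 x 3` and moves `x 6` to position `4`
    refine wConfiguration_isContained_of_adj_zero_three_four hG hdeg (x := fun i => x (3 - i))
      (hx.comp sub_right_injective) (fun i => ?_) (by simpa using h03.symm) (by simpa using h3m)
    simpa [sub_add_eq_sub_sub, sub_add_cancel] using (hadj (3 - (i + 1))).symm

theorem exists_adj_add_three_of_adj_add_two (hG : IsChordal G) (hx : Function.Injective x)
    (hadj : ∀ i, G.Adj (x i) (x (i + 1))) {i : Fin 7} (h : G.Adj (x i) (x (i + 2))) :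
    ∃ j, G.Adj (x j) (x (j + 3)) := by
  obtain ⟨m, hm₁, hm₂, h2m, hm0⟩ := hG.exists_adj_adj_of_cycle hx hadj (i + 2) (k := 5)
    (by norm_num) (by norm_num) (by simpa [add_assoc] using h.symm)
  interval_cases m <;>
    simp only [Nat.cast_ofNat, Fin.isValue, Fin.reduceAdd, add_assoc, add_zero] at h2m hm0
  · exact ⟨i, hm0.symm⟩
  · exact ⟨i + 4, by simpa [add_assoc] using hm0⟩
  · exact ⟨i + 2, by simpa [add_assoc] using h2m⟩
  · exact ⟨i + 6, by simpa [add_assoc] using h2m.symm⟩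

theorem exists_adj_add_three (hG : IsChordal G) (hx : Function.Injective x)
    (hadj : ∀ i, G.Adj (x i) (x (i + 1))) : ∃ j, G.Adj (x j) (x (j + 3)) := by
  obtain ⟨m, hm₁, hm₂, h0m, hm6⟩ := hG.exists_adj_adj_of_cycle hx hadj 0 (k := 6)
    (by norm_num) (by norm_num) (by simpa using (hadj 6).symm)
  interval_cases m <;> simp only [Nat.cast_ofNat, Fin.isValue, zero_add] at h0m hm6
  · exact exists_adj_add_three_of_adj_add_two hG hx hadj (i := 6) hm6.symm
  · exact ⟨6, hm6.symm⟩
  · exact ⟨0, h0m⟩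
  · exact ⟨4, h0m.symm⟩
  · exact exists_adj_add_three_of_adj_add_two hG hx hadj (i := 5) h0m.symm

theorem wConfiguration_isContained_of_cycle [Finite V] (hG : IsChordal G)
    (hdeg : ∀ v : V, (G.neighborSet v).ncard ≤ 4) (hx : Function.Injective x)
    (hadj : ∀ i, G.Adj (x i) (x (i + 1))) : WConfiguration ⊑ G := by
  obtain ⟨j, hj⟩ := exists_adj_add_three hG hx hadj
  refine wConfiguration_isContained_of_adj_zero_three hG hdeg (x := fun i => x (i + j))
    (hx.comp (add_left_injective j)) (fun i => ?_) (by simpa [add_comm] using hj)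
  simpa [add_right_comm] using hadj (i + j)

end Heptagon

end

/-- If a chordal graph in which each vertex has degree at most four contains a cycle
of length `7`, then it contains a W-configuration as a subgraph. -/
theorem stmt_3 {V : Type*} [Fintype V] (G : SimpleGraph V) (hG : IsChordal G)
    (hdeg : ∀ v : V, (G.neighborSet v).ncard ≤ 4)
    (v : V) (c : G.Walk v v) (hc : c.IsCycle) (hlen : c.length = 7) :
    ∃ f : Fin 7 → V, Function.Injective f ∧
      ∀ i j : Fin 7, WConfiguration.Adj i j → G.Adj (f i) (f j) := by
  obtain ⟨x⟩ := (SimpleGraph.cycleGraph_isContained_iff (by norm_num)).mpr ⟨v, c, hc, hlen⟩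
  obtain ⟨f⟩ := wConfiguration_isContained_of_cycle hG hdeg x.injective
    fun i => x.toHom.map_adj (by simp [SimpleGraph.cycleGraph_adj])
  exact ⟨f, f.injective, fun i j => f.toHom.map_adj⟩
end

section
/- Let D be an (i,j) digraph. Then no vertex of D is incident to more than i(i-1)j/2 distinct cared edges in the phylogeny graph of D. -/
def caredGraph {V : Type*} (A : V → V → Prop) : SimpleGraph V :=
  competitionGraph A \ underlyingGraph A

theorem caredGraph_adj {V : Type*} {A : V → V → Prop} {x y : V} :
    (caredGraph A).Adj x y ↔ CaredEdge A x y :=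
  Iff.rfl

theorem SimpleGraph.incidenceSet_eq_setOf {V : Type*} (G : SimpleGraph V) (v : V) :
    G.incidenceSet v = {e : Sym2 V | v ∈ e ∧ ∃ x y : V, e = s(x, y) ∧ G.Adj x y} := by
  ext e
  induction e using Sym2.ind with
  | h x y =>
    simp only [SimpleGraph.incidenceSet, Set.mem_ofPred_eq, SimpleGraph.mem_edgeSet, Sym2.eq_iff]
    constructor
    · rintro ⟨hxy, hv⟩
      exact ⟨hv, x, y, Or.inl ⟨rfl, rfl⟩, hxy⟩
    · rintro ⟨hv, x', y', (⟨rfl, rfl⟩ | ⟨rfl, rfl⟩), hxy⟩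
      exacts [⟨hxy, hv⟩, ⟨hxy.symm, hv⟩]

theorem SimpleGraph.ncard_incidenceSet {V : Type*} (G : SimpleGraph V) (v : V) :
    (G.incidenceSet v).ncard = (G.neighborSet v).ncard := by
  classical
  exact Set.ncard_congr' (G.incidenceSetEquivNeighborSet v)

theorem competitionGraph_neighborSet_subset {V : Type*} (A : V → V → Prop) (v : V) :
    (competitionGraph A).neighborSet v ⊆ ⋃ w ∈ {w | A v w}, {u | A u w} \ {v} := by
  rintro u ⟨hvu, w, hvw, huw⟩
  exact Set.mem_biUnion hvw ⟨huw, hvu.symm⟩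

theorem ncard_competitionGraph_neighborSet_le {V : Type*} [Finite V] {A : V → V → Prop}
    {i j : ℕ} (hin : ∀ w, {u | A u w}.ncard ≤ i) (hout : ∀ w, {u | A w u}.ncard ≤ j) (v : V) :
    ((competitionGraph A).neighborSet v).ncard ≤ j * (i - 1) := by
  have hfin := Set.toFinite {w | A v w}
  calc ((competitionGraph A).neighborSet v).ncard
      ≤ (⋃ w ∈ hfin.toFinset, {u | A u w} \ {v}).ncard := by
        simpa only [Set.Finite.mem_toFinset] using
          Set.ncard_le_ncard (competitionGraph_neighborSet_subset A v) (Set.toFinite _)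
    _ ≤ ∑ w ∈ hfin.toFinset, ({u | A u w} \ {v}).ncard := Finset.set_ncard_biUnion_le _ _
    _ ≤ hfin.toFinset.card * (i - 1) := by
        refine Finset.sum_le_card_nsmul _ _ _ fun w hw => ?_
        have hvw : A v w := (Set.Finite.mem_toFinset _).mp hw
        rw [Set.ncard_sdiff_singleton_of_mem (s := {u | A u w}) hvw]
        exact Nat.sub_le_sub_right (hin w) 1
    _ ≤ j * (i - 1) := by
        rw [← Set.ncard_eq_toFinset_card _ hfin]
        exact Nat.mul_le_mul_right _ (hout v)

theorem mul_pred_le_mul_pred_mul_div_two (i j : ℕ) : j * (i - 1) ≤ i * (i - 1) * j / 2 := by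
  rw [Nat.le_div_iff_mul_le two_pos]
  rcases Nat.lt_or_ge i 2 with hi | hi
  · interval_cases i <;> simp
  · calc j * (i - 1) * 2 = 2 * (i - 1) * j := by ring
      _ ≤ i * (i - 1) * j := by gcongr

/-- In an `(i,j)` digraph `D`, no vertex is incident to more than `i(i-1)j/2`
distinct cared edges of the phylogeny graph of `D`. -/
theorem stmt_6 {V : Type*} [Fintype V] (i j : ℕ) (A : V → V → Prop)
    (hD : IsIJDigraph i j A) (v : V) :
    {e : Sym2 V | v ∈ e ∧ ∃ x y : V, e = s(x, y) ∧ CaredEdge A x y}.ncard ≤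
      i * (i - 1) * j / 2 := by
  calc {e : Sym2 V | v ∈ e ∧ ∃ x y : V, e = s(x, y) ∧ CaredEdge A x y}.ncard
      = ((caredGraph A).neighborSet v).ncard := by
        rw [← SimpleGraph.ncard_incidenceSet, SimpleGraph.incidenceSet_eq_setOf]
        simp only [caredGraph_adj]
    _ ≤ ((competitionGraph A).neighborSet v).ncard :=
        Set.ncard_le_ncard (fun _ hu => hu.1) (Set.toFinite _)
    _ ≤ j * (i - 1) := ncard_competitionGraph_neighborSet_le hD.2.1 hD.2.2 v
    _ ≤ i * (i - 1) * j / 2 := mul_pred_le_mul_pred_mul_div_two i j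
end

section
/- Let D be a (2,2) digraph. Then no vertex of D is incident to three or more cared edges in the phylogeny graph of D. -/
/-!
A cared edge at `v` is in particular a competition edge `v y`, witnessed by a common
prey `w` of `v` and `y`. Since `w` has at most two in-neighbours, `y` is the only competitor of
`v` preying on `w`; hence the competitors of `v` inject into the out-neighbours of `v`, of which
there are at most two.
-/

namespace SimpleGraph

theorem ncard_incidenceSet_eq_ncard_neighborSet {V : Type*} (G : SimpleGraph V) (v : V) :
    (G.incidenceSet v).ncard = (G.neighborSet v).ncard := by
  classical
  rw [← Nat.card_coe_set_eq, ← Nat.card_coe_set_eq]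
  exact Nat.card_congr (G.incidenceSetEquivNeighborSet v)

end SimpleGraph

section CompetitionGraph

variable {V : Type*} {A : V → V → Prop}

theorem caredEdges_subset_incidenceSet_competitionGraph (v : V) :
    {e : Sym2 V | v ∈ e ∧ ∃ x y : V, e = s(x, y) ∧ CaredEdge A x y} ⊆
      (competitionGraph A).incidenceSet v := by
  rintro e ⟨hv, x, y, rfl, hxy, -⟩
  exact ⟨hxy, hv⟩

theorem eq_of_arc_of_arc_of_ncard_pred_le_two [Finite V] (hin : ∀ w, {u | A u w}.ncard ≤ 2)
    {v y y' w : V} (hv : A v w) (hy : A y w) (hy' : A y' w) (hyv : y ≠ v) (hy'v : y' ≠ v) :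
    y = y' := by
  by_contra hyy'
  have h3 : 2 < {u | A u w}.ncard :=
    (Set.two_lt_ncard_iff (Set.toFinite _)).mpr ⟨v, y, y', hv, hy, hy', hyv.symm, hy'v.symm, hyy'⟩
  exact (hin w).not_gt h3

theorem ncard_neighborSet_competitionGraph_le [Finite V] (hin : ∀ w, {u | A u w}.ncard ≤ 2)
    (v : V) : ((competitionGraph A).neighborSet v).ncard ≤ {w | A v w}.ncard := by
  have hprey : ∀ y ∈ (competitionGraph A).neighborSet v, ∃ w, A v w ∧ A y w := fun _ hy => hy.2
  choose! prey hprey using hprey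
  refine Set.ncard_le_ncard_of_injOn prey (fun y hy => (hprey y hy).1) ?_ (Set.toFinite _)
  intro y hy y' hy' h
  exact eq_of_arc_of_arc_of_ncard_pred_le_two hin (hprey y hy).1 (hprey y hy).2
    (h ▸ (hprey y' hy').2) hy.1.symm hy'.1.symm

end CompetitionGraph

/-- In a `(2,2)` digraph `D`, no vertex is incident to three or more cared edges of
the phylogeny graph of `D`. -/
theorem stmt_7 {V : Type*} [Fintype V] (A : V → V → Prop)
    (hD : IsIJDigraph 2 2 A) (v : V) :
    {e : Sym2 V | v ∈ e ∧ ∃ x y : V, e = s(x, y) ∧ CaredEdge A x y}.ncard ≤ 2 := by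
  obtain ⟨-, hin, hout⟩ := hD
  calc _ ≤ ((competitionGraph A).incidenceSet v).ncard :=
        Set.ncard_le_ncard (caredEdges_subset_incidenceSet_competitionGraph v) (Set.toFinite _)
    _ = ((competitionGraph A).neighborSet v).ncard :=
        (competitionGraph A).ncard_incidenceSet_eq_ncard_neighborSet v
    _ ≤ {w | A v w}.ncard := ncard_neighborSet_competitionGraph_le hin v
    _ ≤ 2 := hout v
end

section
/- For any (2,2) digraph D, the phylogeny graph of D is K_5-free; that is, P(D) contains no five pairwise adjacent vertices. -/
/-!
Let `m` be a source of a 5-clique `S` of `P(D)` and `M` a sink of `S \ {m}`. Nothing in `S` points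
to `m`, so every other `z ∈ S` is reached from `m`: some out-neighbour `w` of `m` has `w = z` or
`z → w`. Since `w` already has the in-neighbour `m`, it reaches at most two such `z`, one equal to
`w` and one pointing to it; as `m` has at most two out-neighbours, the four vertices split into
`m → z₁ ← z₂` and `m → z₃ ← z₄`. The sink `M` points nowhere in `S \ {m}`, so it is a head, say
`z₁`. Now the in-neighbourhoods of `z₁` and `z₃` are full, which forces the edge `z₄z₁` through a
common out-neighbour, then the edge `z₂z₄` to be the arc `z₂ → z₄`, and leaves no way to realise
the edge `z₂z₃`.
-/

open Relation SimpleGraph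

section

variable {V : Type*} {A : V → V → Prop}

theorem phylogenyGraph_adj_iff {x y : V} :
    (phylogenyGraph A).Adj x y ↔ x ≠ y ∧ (A x y ∨ A y x ∨ ∃ w, A x w ∧ A y w) := by
  simp only [phylogenyGraph, SimpleGraph.sup_adj, underlyingGraph, competitionGraph]
  tauto

theorem exists_arc_reflGen_of_phylogenyGraph_adj {m z : V}
    (hadj : (phylogenyGraph A).Adj m z) (hzm : ¬ A z m) : ∃ w, A m w ∧ ReflGen A z w := by
  obtain ⟨-, h | h | ⟨w, hmw, hzw⟩⟩ := phylogenyGraph_adj_iff.1 hadj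
  exacts [⟨z, h, .refl⟩, absurd h hzm, ⟨w, hmw, .single hzw⟩]

theorem exists_source_of_acyclic [Finite V] (hA : ∀ v, ¬ TransGen A v v) {s : Set V}
    (hs : s.Nonempty) : ∃ m ∈ s, ∀ z ∈ s, ¬ A z m := by
  have : Std.Irrefl (TransGen A) := ⟨hA⟩
  obtain ⟨m, hm, hmin⟩ := (Finite.wellFounded_of_trans_of_irrefl (TransGen A)).has_min s hs
  exact ⟨m, hm, fun z hz h ↦ hmin z hz (.single h)⟩

theorem exists_sink_of_acyclic [Finite V] (hA : ∀ v, ¬ TransGen A v v) {s : Set V}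
    (hs : s.Nonempty) : ∃ M ∈ s, ∀ z ∈ s, ¬ A M z :=
  exists_source_of_acyclic (A := Function.swap A) (fun v h ↦ hA v (transGen_swap.1 h)) hs

theorem eq_or_eq_of_ncard_le_two {α : Type*} {s : Set α} (hs : s.ncard ≤ 2) (hfin : s.Finite)
    {a b c : α} (ha : a ∈ s) (hb : b ∈ s) (hab : a ≠ b) (hc : c ∈ s) : c = a ∨ c = b := by
  by_contra! h
  exact ((Set.two_lt_ncard_iff hfin).2 ⟨a, b, c, ha, hb, hc, hab, h.1.symm, h.2.symm⟩).not_ge hs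

theorem eq_pairs_of_ncard_le_two {α : Type*} {a b c d : α}
    (hcard : ({a, b, c, d} : Set α).ncard ≤ 2) (habc : ¬ (a = b ∧ a = c))
    (habd : ¬ (a = b ∧ a = d)) (hacd : ¬ (a = c ∧ a = d)) (hbcd : ¬ (b = c ∧ b = d)) :
    (a = b ∧ c = d) ∨ (a = c ∧ b = d) ∨ (a = d ∧ b = c) := by
  have h {x y z : α} (hx : x ∈ ({a, b, c, d} : Set α)) (hy : y ∈ ({a, b, c, d} : Set α))
      (hz : z ∈ ({a, b, c, d} : Set α)) : x = y ∨ z = x ∨ z = y := by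
    by_cases hxy : x = y
    · exact .inl hxy
    · exact .inr (eq_or_eq_of_ncard_le_two hcard (Set.toFinite _) hx hy hxy hz)
  have := h (x := a) (y := b) (z := c) (by simp) (by simp) (by simp)
  have := h (x := a) (y := b) (z := d) (by simp) (by simp) (by simp)
  have := h (x := a) (y := c) (z := d) (by simp) (by simp) (by simp)
  have := h (x := b) (y := c) (z := d) (by simp) (by simp) (by simp)
  grind

namespace IsIJDigraph

variable {i j : ℕ}

theorem not_arc_of_arc (hD : IsIJDigraph i j A) {a b : V} (hab : A a b) : ¬ A b a :=
  fun hba ↦ hD.1 a ((TransGen.single hab).tail hba)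

theorem not_arc_of_path_two (hD : IsIJDigraph i j A) {a b c : V} (hab : A a b) (hbc : A b c) :
    ¬ A c a :=
  fun hca ↦ hD.1 a (((TransGen.single hab).tail hbc).tail hca)

theorem eq_or_eq_of_arc_to [Finite V] (hD : IsIJDigraph 2 j A) {v a b c : V} (ha : A a v)
    (hb : A b v) (hab : a ≠ b) (hc : A c v) : c = a ∨ c = b :=
  eq_or_eq_of_ncard_le_two (hD.2.1 v) (Set.toFinite _) ha hb hab hc

theorem eq_or_eq_of_arc_from [Finite V] (hD : IsIJDigraph i 2 A) {v a b c : V} (ha : A v a)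
    (hb : A v b) (hab : a ≠ b) (hc : A v c) : c = a ∨ c = b :=
  eq_or_eq_of_ncard_le_two (hD.2.2 v) (Set.toFinite _) ha hb hab hc

theorem eq_and_arc_of_reflGen [Finite V] (hD : IsIJDigraph 2 j A) {m w z₁ z₂ : V}
    (hmw : A m w) (h₁ : ReflGen A z₁ w) (h₂ : ReflGen A z₂ w) (hm₁ : m ≠ z₁) (hm₂ : m ≠ z₂)
    (h₁₂ : z₁ ≠ z₂) : (w = z₁ ∧ A z₂ z₁) ∨ (w = z₂ ∧ A z₁ z₂) := by
  rcases h₁ with _ | h₁ <;> rcases h₂ with _ | h₂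
  · exact absurd rfl h₁₂
  · exact .inl ⟨rfl, h₂⟩
  · exact .inr ⟨rfl, h₁⟩
  · rcases hD.eq_or_eq_of_arc_to hmw h₁ hm₁ h₂ with rfl | rfl
    exacts [absurd rfl hm₂, absurd rfl h₁₂]

theorem not_three_reflGen [Finite V] (hD : IsIJDigraph 2 j A) {m w z₁ z₂ z₃ : V} (hmw : A m w)
    (h₁ : ReflGen A z₁ w) (h₂ : ReflGen A z₂ w) (h₃ : ReflGen A z₃ w) (hm₁ : m ≠ z₁)
    (hm₂ : m ≠ z₂) (hm₃ : m ≠ z₃) (h₁₂ : z₁ ≠ z₂) (h₁₃ : z₁ ≠ z₃) (h₂₃ : z₂ ≠ z₃) : False := by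
  have := hD.eq_and_arc_of_reflGen hmw h₁ h₂ hm₁ hm₂ h₁₂
  have := hD.eq_and_arc_of_reflGen hmw h₁ h₃ hm₁ hm₃ h₁₃
  have := hD.eq_and_arc_of_reflGen hmw h₂ h₃ hm₂ hm₃ h₂₃
  grind

theorem false_of_shared_in_neighbor [Finite V] (hD : IsIJDigraph 2 2 A) {m M x y b : V}
    (hmM : A m M) (hxM : A x M) (hmb : A m b) (hyb : A y b)
    (hMx : ¬ A M x) (hMy : ¬ A M y) (hMb : ¬ A M b) (hx : m ≠ x) (hy : m ≠ y) (hb : m ≠ b)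
    (adj_yM : (phylogenyGraph A).Adj y M) (adj_xy : (phylogenyGraph A).Adj x y)
    (adj_xb : (phylogenyGraph A).Adj x b) : False := by
  have inM {z} (hz : A z M) : z = m ∨ z = x := hD.eq_or_eq_of_arc_to hmM hxM hx hz
  have inb {z} (hz : A z b) : z = m ∨ z = y := hD.eq_or_eq_of_arc_to hmb hyb hy hz
  obtain ⟨w, hyw, hMw⟩ : ∃ w, A y w ∧ A M w := by
    obtain ⟨-, h | h | h⟩ := phylogenyGraph_adj_iff.1 adj_yM
    · rcases inM h with rfl | rfl
      exacts [absurd rfl hy, absurd rfl adj_xy.ne]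
    · exact absurd h hMy
    · exact h
  have outy {z} (hz : A y z) : z = b ∨ z = w :=
    hD.eq_or_eq_of_arc_from hyb hyw (by rintro rfl; exact hMb hMw) hz
  have inw {z} (hz : A z w) : z = y ∨ z = M := hD.eq_or_eq_of_arc_to hyw hMw adj_yM.ne hz
  have hxy : A x y := by
    obtain ⟨-, h | h | ⟨u, hxu, hyu⟩⟩ := phylogenyGraph_adj_iff.1 adj_xy
    · exact h
    · rcases outy h with rfl | rfl
      exacts [absurd rfl adj_xb.ne, absurd hMw hMx]
    · rcases outy hyu with rfl | rfl
      · rcases inb hxu with rfl | rfl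
        exacts [absurd rfl hx, absurd rfl adj_xy.ne]
      · rcases inw hxu with rfl | rfl
        exacts [absurd rfl adj_xy.ne, absurd hxM hMx]
  have outx {z} (hz : A x z) : z = M ∨ z = y :=
    hD.eq_or_eq_of_arc_from hxM hxy adj_yM.ne.symm hz
  obtain ⟨-, h | h | ⟨u, hxu, hbu⟩⟩ := phylogenyGraph_adj_iff.1 adj_xb
  · rcases inb h with rfl | rfl
    exacts [hx rfl, adj_xy.ne rfl]
  · exact hD.not_arc_of_path_two hxy hyb h
  · rcases outx hxu with rfl | rfl
    · rcases inM hbu with rfl | rfl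
      exacts [hb rfl, adj_xb.ne rfl]
    · exact hD.not_arc_of_arc hyb hbu

theorem false_of_paired_witnesses [Finite V] (hD : IsIJDigraph 2 2 A) {m M x p q u v : V}
    (hnd : [m, M, x, p, q].Nodup) (hS : (phylogenyGraph A).IsClique {m, M, x, p, q})
    (hM : ∀ z ∈ [x, p, q], ¬ A M z) (hmu : A m u) (hMu : ReflGen A M u) (hxu : ReflGen A x u)
    (hmv : A m v) (hpv : ReflGen A p v) (hqv : ReflGen A q v) : False := by
  obtain ⟨⟨hmM, hmx, hmp, hmq, -⟩, ⟨hMx, hMp, hMq, -⟩, ⟨hxp, hxq, -⟩, ⟨hpq, -⟩, -⟩ := by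
    simpa only [List.nodup_cons, List.mem_cons, List.not_mem_nil, not_or] using hnd
  obtain ⟨rfl, hxM⟩ := (hD.eq_and_arc_of_reflGen hmu hMu hxu hmM hmx hMx).resolve_right
    fun h ↦ hM x (by simp) h.2
  rcases hD.eq_and_arc_of_reflGen hmv hpv hqv hmp hmq hpq with ⟨rfl, hqp⟩ | ⟨rfl, hpq⟩
  · exact hD.false_of_shared_in_neighbor hmu hxM hmv hqp (hM x (by simp)) (hM q (by simp))
      (hM v (by simp)) hmx hmq hmp (hS (by simp) (by simp) (Ne.symm hMq))
      (hS (by simp) (by simp) hxq) (hS (by simp) (by simp) hxp)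
  · exact hD.false_of_shared_in_neighbor hmu hxM hmv hpq (hM x (by simp)) (hM p (by simp))
      (hM v (by simp)) hmx hmp hmq (hS (by simp) (by simp) (Ne.symm hMp))
      (hS (by simp) (by simp) hxp) (hS (by simp) (by simp) hxq)

theorem false_of_source_sink [Finite V] (hD : IsIJDigraph 2 2 A) {m M c d e : V}
    (hnd : [m, M, c, d, e].Nodup) (hS : (phylogenyGraph A).IsClique {m, M, c, d, e})
    (hm : ∀ z ∈ [M, c, d, e], ¬ A z m) (hM : ∀ z ∈ [c, d, e], ¬ A M z) : False := by
  obtain ⟨⟨hmM, hmc, hmd, hme, -⟩, ⟨hMc, hMd, hMe, -⟩, ⟨hcd, hce, -⟩, ⟨hde, -⟩, -⟩ := by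
    simpa only [List.nodup_cons, List.mem_cons, List.not_mem_nil, not_or] using hnd
  have witness {z} (hz : z ∈ [M, c, d, e]) (hmz : m ≠ z) : ∃ w, A m w ∧ ReflGen A z w :=
    exists_arc_reflGen_of_phylogenyGraph_adj (hS (by simp) (by simp at hz ⊢; tauto) hmz) (hm z hz)
  obtain ⟨wM, hmwM, hwM⟩ := witness (by simp) hmM
  obtain ⟨wc, hmwc, hwc⟩ := witness (by simp) hmc
  obtain ⟨wd, hmwd, hwd⟩ := witness (by simp) hmd
  obtain ⟨we, hmwe, hwe⟩ := witness (by simp) hme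
  have hcard : ({wM, wc, wd, we} : Set V).ncard ≤ 2 := by
    refine (Set.ncard_le_ncard ?_).trans (hD.2.2 m)
    rintro w (rfl | rfl | rfl | rfl) <;> assumption
  rcases eq_pairs_of_ncard_le_two hcard
    (fun ⟨h₁, h₂⟩ ↦ hD.not_three_reflGen hmwM hwM (h₁ ▸ hwc) (h₂ ▸ hwd) hmM hmc hmd hMc hMd hcd)
    (fun ⟨h₁, h₂⟩ ↦ hD.not_three_reflGen hmwM hwM (h₁ ▸ hwc) (h₂ ▸ hwe) hmM hmc hme hMc hMe hce)
    (fun ⟨h₁, h₂⟩ ↦ hD.not_three_reflGen hmwM hwM (h₁ ▸ hwd) (h₂ ▸ hwe) hmM hmd hme hMd hMe hde)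
    (fun ⟨h₁, h₂⟩ ↦ hD.not_three_reflGen hmwc hwc (h₁ ▸ hwd) (h₂ ▸ hwe) hmc hmd hme hcd hce hde)
    with ⟨h₁, h₂⟩ | ⟨h₁, h₂⟩ | ⟨h₁, h₂⟩
  · exact hD.false_of_paired_witnesses hnd hS hM hmwM hwM (h₁ ▸ hwc) hmwd hwd (h₂ ▸ hwe)
  · refine hD.false_of_paired_witnesses (x := d) (p := c) (q := e) ?_ ?_
      (fun z hz ↦ hM z (by simp at hz ⊢; tauto)) hmwM hwM (h₁ ▸ hwd) hmwc hwc (h₂ ▸ hwe)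
    · exact hnd.perm (.cons _ <| .cons _ <| .swap _ _ _)
    · rwa [Set.insert_comm d c]
  · refine hD.false_of_paired_witnesses (x := e) (p := c) (q := d) ?_ ?_
      (fun z hz ↦ hM z (by simp at hz ⊢; tauto)) hmwM hwM (h₁ ▸ hwe) hmwc hwc (h₂ ▸ hwd)
    · exact hnd.perm (.cons _ <| .cons _ <| .trans (.cons _ (.swap _ _ _)) (.swap _ _ _))
    · rwa [Set.insert_comm e c, Set.pair_comm e d]

theorem phylogenyGraph_cliqueFree_five [Finite V] (hD : IsIJDigraph 2 2 A) :
    (phylogenyGraph A).CliqueFree 5 := by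
  classical
  intro S hS
  obtain ⟨m, hmS, hm⟩ := exists_source_of_acyclic hD.1 (s := S)
    (Finset.coe_nonempty.2 (Finset.card_pos.1 (by simp [hS.card_eq])))
  obtain ⟨M, hMS, hM⟩ := exists_sink_of_acyclic hD.1 (s := S.erase m)
    (Finset.coe_nonempty.2 (Finset.card_pos.1
      (by simp [Finset.card_erase_of_mem hmS, hS.card_eq])))
  obtain ⟨c, d, e, hcd, hce, hde, hcde⟩ :
      ∃ c d e, c ≠ d ∧ c ≠ e ∧ d ≠ e ∧ (S.erase m).erase M = {c, d, e} :=
    Finset.card_eq_three.1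
      (by simp [Finset.card_erase_of_mem hmS, Finset.card_erase_of_mem hMS, hS.card_eq])
  simp only [Finset.ext_iff, Finset.mem_erase, Finset.mem_insert, Finset.mem_singleton] at hcde
  obtain ⟨hcM, hcm, hcS⟩ := (hcde c).2 (by simp)
  obtain ⟨hdM, hdm, hdS⟩ := (hcde d).2 (by simp)
  obtain ⟨heM, hem, heS⟩ := (hcde e).2 (by simp)
  obtain ⟨hMS, hMm⟩ : M ∈ S ∧ M ≠ m := by simpa using hMS
  have hsub : ({m, M, c, d, e} : Set V) ⊆ S := by simp [Set.insert_subset_iff, *]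
  refine hD.false_of_source_sink (c := c) (d := d) (e := e) ?_ (hS.isClique.subset hsub)
    (fun z hz ↦ hm z (hsub (by simp at hz ⊢; tauto)))
    (fun z hz ↦ hM z (Finset.mem_erase.2 ((hcde z).2 (by simpa using hz)).2))
  simp [hMm.symm, hcm.symm, hdm.symm, hem.symm, hcM.symm, hdM.symm, heM.symm, hcd, hce, hde]

end IsIJDigraph

end

/-- For any `(2,2)` digraph `D`, the phylogeny graph of `D` is `K₅`-free: it does not
contain five pairwise adjacent vertices. -/
theorem stmt_8 {V : Type*} [Fintype V] (A : V → V → Prop)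
    (hD : IsIJDigraph 2 2 A) :
    ¬ ∃ f : Fin 5 → V, ∀ i j : Fin 5, i ≠ j →
      (phylogenyGraph A).Adj (f i) (f j) := by
  rintro ⟨f, hf⟩
  let φ : completeGraph (Fin 5) →g phylogenyGraph A := ⟨f, hf _ _⟩
  exact IsContained.not_cliqueFree ⟨φ.toCopy (Hom.injective_of_top_hom φ)⟩
    hD.phylogenyGraph_cliqueFree_five
end

section
/- Let D be a (2,2) digraph whose phylogeny graph P(D) contains a hole H. If v is a vertex of D taking care of a cared edge lying on H, then v does not lie on H. -/
/-!
The cared edge `xy` together with the arcs `x → v` and `y → v` makes `x, y, v` a triangle of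
the phylogeny graph. If `v` were on the hole, the hole, being induced, would contain all three
edges of this triangle; but in a cycle of length at least `4` the two cycle-neighbours of a vertex
are never joined by a cycle edge.
-/

namespace SimpleGraph.Walk.IsCycle

variable {V : Type*} {G : SimpleGraph V}

lemma not_adj_toSubgraph_snd_penultimate {u : V} {c : G.Walk u u} (hc : c.IsCycle)
    (hl : 4 ≤ c.length) : ¬ c.toSubgraph.Adj c.snd c.penultimate := by
  intro h
  have hnbr : c.penultimate ∈ c.toSubgraph.neighborSet (c.getVert 1) := h
  rw [hc.neighborSet_toSubgraph_internal one_ne_zero (by omega)] at hnbr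
  rcases hnbr with h0 | h2
  · have := (hc.getVert_endpoint_iff (i := c.length - 1) (by omega)).mp (h0.trans c.getVert_zero)
    omega
  · have := hc.getVert_injOn (by simp only [Set.mem_ofPred_eq]; omega)
      (by simp only [Set.mem_ofPred_eq]; omega) h2
    omega

lemma not_adj_toSubgraph_of_adj_of_adj {u x y z : V} {c : G.Walk u u} (hc : c.IsCycle)
    (hl : 4 ≤ c.length) (hxy : c.toSubgraph.Adj x y) (hyz : c.toSubgraph.Adj y z) :
    ¬ c.toSubgraph.Adj x z := by
  classical
  intro hxz
  have hy : y ∈ c.support := mem_support_of_adj_toSubgraph hyz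
  set c' := c.rotate y hy
  have hc' : c'.IsCycle := hc.rotate hy
  have hsub : c'.toSubgraph = c.toSubgraph := toSubgraph_rotate c hy
  have hl' : 4 ≤ c'.length := by rwa [length_rotate]
  have hx : x ∈ c'.toSubgraph.neighborSet y := hsub ▸ hxy.symm
  have hz : z ∈ c'.toSubgraph.neighborSet y := hsub ▸ hyz
  rw [hc'.neighborSet_toSubgraph_endpoint] at hx hz
  have hxz' : c'.toSubgraph.Adj x z := hsub ▸ hxz
  rcases hx with rfl | rfl <;> rcases hz with rfl | rfl
  · exact hxz'.ne rfl
  · exact hc'.not_adj_toSubgraph_snd_penultimate hl' hxz'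
  · exact hc'.not_adj_toSubgraph_snd_penultimate hl' hxz'.symm
  · exact hxz'.ne rfl

end SimpleGraph.Walk.IsCycle

lemma IsHole.not_adj_of_adj_of_adj {V : Type*} {G : SimpleGraph V} {u x y z : V}
    {c : G.Walk u u} (hH : IsHole G c) (hx : x ∈ c.support) (hy : y ∈ c.support)
    (hz : z ∈ c.support) (hxy : G.Adj x y) (hyz : G.Adj y z) : ¬ G.Adj x z := by
  obtain ⟨hc, hl, hinduced⟩ := hH
  have toSubgraph_adj {a b : V} (ha : a ∈ c.support) (hb : b ∈ c.support) (hab : G.Adj a b) :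
      c.toSubgraph.Adj a b :=
    SimpleGraph.Walk.adj_toSubgraph_iff_mem_edges.mpr (hinduced a ha b hb hab)
  exact fun hxz => hc.not_adj_toSubgraph_of_adj_of_adj hl (toSubgraph_adj hx hy hxy)
    (toSubgraph_adj hy hz hyz) (toSubgraph_adj hx hz hxz)

lemma phylogenyGraph_adj_of_arc {V : Type*} {A : V → V → Prop} {x y : V} (hne : x ≠ y)
    (hA : A x y) : (phylogenyGraph A).Adj x y :=
  Or.inl ⟨hne, Or.inl hA⟩

lemma CaredEdge.symm {V : Type*} {A : V → V → Prop} {x y : V} (hcared : CaredEdge A x y) :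
    CaredEdge A y x :=
  ⟨hcared.1.symm, fun h => hcared.2 h.symm⟩

lemma CaredEdge.left_ne_of_arc_right {V : Type*} {A : V → V → Prop} {x y v : V}
    (hcared : CaredEdge A x y) (hy : A y v) : x ≠ v := by
  rintro rfl
  exact hcared.2 ⟨hcared.1.ne, Or.inr hy⟩

theorem stmt_11_general {V : Type*} (A : V → V → Prop)
    (u : V) (c : (phylogenyGraph A).Walk u u) (hH : IsHole (phylogenyGraph A) c)
    (x y v : V) (hxy : s(x, y) ∈ c.edges) (hcared : CaredEdge A x y)
    (hx : A x v) (hy : A y v) :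
    v ∉ c.support := by
  intro hv
  have hxv : x ≠ v := hcared.left_ne_of_arc_right hy
  have hyv : y ≠ v := hcared.symm.left_ne_of_arc_right hx
  exact hH.not_adj_of_adj_of_adj (c.fst_mem_support_of_mem_edges hxy) hv
    (c.snd_mem_support_of_mem_edges hxy) (phylogenyGraph_adj_of_arc hxv hx)
    (phylogenyGraph_adj_of_arc hyv hy).symm (Or.inr hcared.1)

/-- Let `D` be a `(2,2)` digraph whose phylogeny graph contains a hole `H`.
If `v` is a vertex taking care of a cared edge lying on `H`, then `v` is not on `H`. -/
theorem stmt_11 {V : Type*} [Fintype V] (A : V → V → Prop)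
    (hD : IsIJDigraph 2 2 A)
    (u : V) (c : (phylogenyGraph A).Walk u u) (hH : IsHole (phylogenyGraph A) c)
    (x y v : V) (hxy : s(x, y) ∈ c.edges) (hcared : CaredEdge A x y)
    (hx : A x v) (hy : A y v) :
    v ∉ c.support :=
  stmt_11_general A u c hH x y v hxy hcared hx hy
end

section
/- Let D be a (2,2) digraph whose phylogeny graph P(D) contains a hole H, let W be a set extending H, and let L be the subgraph of the underlying graph U(D) induced by V(H) ∪ W. If L is chordal and xy is an edge of H taken care of by a vertex w ∈ W, then there exists a vertex z on H such that z is adjacent to both x and w in L. -/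
/-- Given a hole `c` in the phylogeny graph of a digraph with arc relation `A`,
a set `W` *extends* `c` if every element of `W` takes care of some cared edge of `c`
and every cared edge of `c` is taken care of by some element of `W`. -/
def ExtendingSet {V : Type*} (A : V → V → Prop) {v : V}
    (c : (phylogenyGraph A).Walk v v) (W : Set V) : Prop :=
  (∀ w ∈ W, ∃ x y : V, s(x, y) ∈ c.edges ∧ CaredEdge A x y ∧ A x w ∧ A y w) ∧
  (∀ x y : V, s(x, y) ∈ c.edges → CaredEdge A x y → ∃ w ∈ W, A x w ∧ A y w)

/-!
No vertex of `W` lies on the hole: two consecutive hole vertices with a common out-neighbour on the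
hole would span a triangle of the hole. As in-degrees are at most two, every in-neighbour of a
vertex of `W` is on the hole, so `W` is independent in `U(D)` and the in-neighbours of `w` are just
`x` and `y`. Going around the hole from `y` to `x` and replacing every other cared edge by its care
vertex (which is not `w`) gives a walk from `y` to `x` in `L - w`. Now take a neighbour `t ≠ x` of
`w` with a shortest possible path `P` to `x` in `L - w`. If `P` is not a single edge, `w` and `P`
close a cycle of length at least 4; a chord inside `P` would shorten `P`, and a chord from `w` would
give a neighbour of `w` nearer to `x`, so this cycle would be a hole of the chordal graph `L`.
-/

namespace SimpleGraph.Walk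

variable {V : Type*} {G : SimpleGraph V}

theorem two_le_length_of_notMem_edges {u v : V} (p : G.Walk u v) (huv : u ≠ v)
    (h : s(u, v) ∉ p.edges) : 2 ≤ p.length := by
  match p with
  | .nil => exact absurd rfl huv
  | .cons _ .nil => simp at h
  | .cons _ (.cons _ _) => simp

theorem IsPath.length_eq_two_of_mem_edges {u m v : V} {p : G.Walk u v} (hp : p.IsPath)
    (huv : u ≠ v) (hum : s(u, m) ∈ p.edges) (hmv : s(m, v) ∈ p.edges) : p.length = 2 := by
  cases p with
  | nil => simp at hum
  | cons h q =>
    obtain rfl : m = _ := by simpa using hp.eq_snd_of_mem_edges hum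
    have hmv' : s(m, v) ∈ q.edges := by
      rcases List.mem_cons.mp hmv with he | he
      · rcases Sym2.eq_iff.mp he with ⟨h1, -⟩ | ⟨-, h2⟩
        · exact absurd h1.symm h.ne
        · exact absurd h2.symm huv
      · exact he
    simp [hp.of_cons.length_eq_one_of_mem_edges hmv']

theorem IsCycle.length_eq_three_of_mem_edges {u a b d : V} {c : G.Walk u u} (hc : c.IsCycle)
    (hab : s(a, b) ∈ c.edges) (had : s(a, d) ∈ c.edges) (hbd : s(b, d) ∈ c.edges) :
    c.length = 3 := by
  classical
  wlog hua : u = a generalizing u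
  · have ha := c.fst_mem_support_of_mem_edges hab
    have hmem := fun e => (c.rotate_edges a ha).mem_iff (a := e)
    simpa using this (hc.rotate ha) ((hmem _).2 hab) ((hmem _).2 had) ((hmem _).2 hbd) rfl
  subst hua
  cases c with
  | nil => exact absurd rfl hc.ne_nil
  | cons h q =>
    rename_i v
    obtain ⟨hq, -⟩ := (cons_isCycle_iff q h).mp hc
    have hrest : ∀ z, s(u, z) ∈ (cons h q).edges → z ≠ v → s(u, z) ∈ q.edges := by
      intro z hz hzv
      rcases List.mem_cons.mp hz with he | he
      · rcases Sym2.eq_iff.mp he with ⟨-, h2⟩ | ⟨h1, -⟩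
        · exact absurd h2 hzv
        · exact absurd h1 h.ne
      · exact he
    wlog hvd : v ≠ d generalizing b d
    · exact this (by rwa [Sym2.eq_swap]) had hab
        (by rw [not_ne_iff.mp hvd]; exact ((cons h q).adj_of_mem_edges hbd).ne.symm)
    have hud : s(u, d) ∈ q.edges := hrest d had (Ne.symm hvd)
    by_cases hvb : v = b
    · subst hvb
      have hvd' : s(v, d) ∈ q.edges := by
        rcases List.mem_cons.mp hbd with he | he
        · rcases Sym2.eq_iff.mp he with ⟨h1, -⟩ | ⟨-, h2⟩
          · exact absurd h1.symm h.ne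
          · exact absurd h2.symm ((cons h q).adj_of_mem_edges had).ne
        · exact he
      simp [hq.length_eq_two_of_mem_edges h.ne.symm hvd' (by rwa [Sym2.eq_swap])]
    · have hub : s(u, b) ∈ q.edges := hrest b hab (Ne.symm hvb)
      have hsnd : ∀ z, s(u, z) ∈ q.edges → z = q.reverse.snd := fun z hz =>
        hq.reverse.eq_snd_of_mem_edges (by simpa using hz)
      exact absurd ((hsnd b hub).trans (hsnd d hud).symm) ((cons h q).adj_of_mem_edges hbd).ne

theorem IsTrail.exists_walk_of_mem_edges {u x y : V} {c : G.Walk u u} (hc : c.IsTrail)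
    (hxy : s(x, y) ∈ c.edges) :
    ∃ p : G.Walk y x, (∀ e ∈ p.edges, e ∈ c.edges) ∧ s(x, y) ∉ p.edges := by
  classical
  have hx := c.fst_mem_support_of_mem_edges hxy
  set c' := c.rotate x hx
  have hmem : ∀ e, e ∈ c'.edges ↔ e ∈ c.edges := fun e => (c.rotate_edges x hx).mem_iff
  have hy : y ∈ c'.support := c'.snd_mem_support_of_mem_edges ((hmem _).2 hxy)
  have hdisj := (hc.rotate hx).disjoint_edges_takeUntil_dropUntil hy
  have hsplit : ∀ e, e ∈ c'.edges ↔
      e ∈ (c'.takeUntil y hy).edges ∨ e ∈ (c'.dropUntil y hy).edges := by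
    intro e
    rw [← List.mem_append, ← edges_append, take_spec]
  rcases (hsplit _).1 ((hmem _).2 hxy) with h | h
  · refine ⟨c'.dropUntil y hy, fun e he => (hmem e).1 ((hsplit e).2 (Or.inr he)), ?_⟩
    exact fun h' => hdisj h h'
  · refine ⟨(c'.takeUntil y hy).reverse, fun e he => (hmem e).1 ((hsplit e).2 (Or.inl ?_)), ?_⟩
    · simpa using he
    · simpa using fun h' => hdisj h' h

theorem exists_walk_support_subset_of_forall_mem_edges {G' : SimpleGraph V} {T : Set V}
    {a b : V} (p : G.Walk a b) (ha : a ∈ T)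
    (h : ∀ u v, s(u, v) ∈ p.edges → ∃ q : G'.Walk u v, ∀ z ∈ q.support, z ∈ T) :
    ∃ q : G'.Walk a b, ∀ z ∈ q.support, z ∈ T := by
  induction p with
  | nil => exact ⟨nil, by simpa using ha⟩
  | @cons u v _ hadj p ih =>
    obtain ⟨q₁, hq₁⟩ := h u v (by simp)
    obtain ⟨q₂, hq₂⟩ := ih (hq₁ _ q₁.end_mem_support) fun u v huv => h u v (by simp [huv])
    refine ⟨q₁.append q₂, fun z hz => ?_⟩
    rcases (mem_support_append_iff q₁ q₂).1 hz with hz | hz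
    exacts [hq₁ z hz, hq₂ z hz]

theorem exists_isPath_length_lt_of_adj {u v a b : V} (p : G.Walk u v) (ha : a ∈ p.support)
    (hb : b ∈ p.support) (hab : G.Adj a b) (hnot : s(a, b) ∉ p.edges) :
    ∃ q : G.Walk u v, q.IsPath ∧ q.length < p.length ∧ q.support ⊆ p.support := by
  classical
  suffices ∃ q : G.Walk u v, q.length < p.length ∧ q.support ⊆ p.support by
    obtain ⟨q, hlt, hsub⟩ := this
    exact ⟨q.bypass, q.bypass_isPath, q.length_bypass_le_length.trans_lt hlt,
      fun z hz => hsub (q.support_bypass_subset_support hz)⟩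
  have hp := congrArg length (p.take_spec ha)
  rw [length_append] at hp
  rcases (mem_support_append_iff _ _).1 ((p.take_spec ha).symm ▸ hb) with hb' | hb'
  · set r := p.takeUntil a ha
    have hr := congrArg length (r.take_spec hb')
    rw [length_append] at hr
    have h2 : 2 ≤ (r.dropUntil b hb').length := by
      refine two_le_length_of_notMem_edges _ hab.ne.symm fun he => hnot ?_
      rw [Sym2.eq_swap]
      exact p.edges_takeUntil_subset_edges ha (r.edges_dropUntil_subset_edges hb' he)
    refine ⟨(r.takeUntil b hb').append (cons hab.symm (p.dropUntil a ha)), ?_, ?_⟩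
    · simp only [length_append, length_cons]
      omega
    · intro z hz
      rw [mem_support_append_iff, support_cons, List.mem_cons] at hz
      rcases hz with hz | rfl | hz
      · exact p.support_takeUntil_subset_support ha (r.support_takeUntil_subset_support hb' hz)
      · exact hb
      · exact p.support_dropUntil_subset_support ha hz
  · set r := p.dropUntil a ha
    have hr := congrArg length (r.take_spec hb')
    rw [length_append] at hr
    have h2 : 2 ≤ (r.takeUntil b hb').length :=
      two_le_length_of_notMem_edges _ hab.ne fun he =>
        hnot (p.edges_dropUntil_subset_edges ha (r.edges_takeUntil_subset_edges hb' he))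
    refine ⟨(p.takeUntil a ha).append (cons hab (r.dropUntil b hb')), ?_, ?_⟩
    · simp only [length_append, length_cons]
      omega
    · intro z hz
      rw [mem_support_append_iff, support_cons, List.mem_cons] at hz
      rcases hz with hz | rfl | hz
      · exact p.support_takeUntil_subset_support ha hz
      · exact ha
      · exact p.support_dropUntil_subset_support ha (r.support_dropUntil_subset_support hb' hz)

end SimpleGraph.Walk

open SimpleGraph Walk in
theorem IsChordal.exists_common_neighbor {V : Type*} {G : SimpleGraph V} (hG : IsChordal G)
    {w x t : V} (hwx : G.Adj w x) (hwt : G.Adj w t) (htx : t ≠ x) (p : G.Walk t x)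
    (hwp : w ∉ p.support) : ∃ z, G.Adj w z ∧ G.Adj z x := by
  classical
  obtain ⟨q, hq, hwq⟩ : ∃ q : G.Walk t x, q.IsPath ∧ w ∉ q.support :=
    ⟨p.bypass, p.bypass_isPath, fun h => hwp (p.support_bypass_subset_support h)⟩
  clear hwp p
  induction hn : q.length using Nat.strong_induction_on generalizing t with
  | _ n ih =>
  subst hn
  by_cases h1 : q.length = 1
  · exact ⟨t, hwt, q.adj_of_length_eq_one h1⟩
  have h2 : 2 ≤ q.length := by
    have : q.length ≠ 0 := fun h0 => htx (q.eq_of_length_eq_zero h0)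
    omega
  set C := cons hwt (q.concat hwx.symm)
  have hC : C.IsCycle := by
    refine (cons_isCycle_iff _ _).2 ⟨hq.concat hwq _, fun h => ?_⟩
    rw [edges_concat, List.concat_eq_append, List.mem_append] at h
    rcases h with h | h
    · exact hwq (q.fst_mem_support_of_mem_edges h)
    · rcases Sym2.eq_iff.mp (List.mem_singleton.mp h) with ⟨h', -⟩ | ⟨-, h'⟩
      exacts [hwx.ne h', htx h']
  have hCl : 4 ≤ C.length := by simp only [C, length_cons, length_concat]; omega
  obtain ⟨a, ha, b, hb, hab, hnot⟩ := hG w C hC hCl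
  have hsupp : ∀ z ∈ C.support, z = w ∨ z ∈ q.support := by
    simp only [C, support_cons, support_concat, List.mem_cons, List.mem_append]
    tauto
  have hchord : ∀ b ∈ q.support, G.Adj w b → s(w, b) ∉ C.edges →
      ∃ z, G.Adj w z ∧ G.Adj z x := by
    intro b hb hwb hnot
    have hbt : b ≠ t := by rintro rfl; simp [C] at hnot
    have hbx : b ≠ x := by rintro rfl; simp [C] at hnot
    exact ih _ (length_dropUntil_lt_length hb hbt) hwb hbx (q.dropUntil b hb)
      (hq.dropUntil hb) (fun h => hwq (q.support_dropUntil_subset_support hb h)) rfl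
  rcases hsupp a ha with rfl | ha' <;> rcases hsupp b hb with rfl | hb'
  · exact absurd hab (G.loopless.irrefl _)
  · exact hchord b hb' hab hnot
  · exact hchord a ha' hab.symm (by rwa [Sym2.eq_swap])
  · obtain ⟨r, hr, hlt, hsub⟩ := exists_isPath_length_lt_of_adj q ha' hb' hab
      fun h => hnot (by simp [C, h])
    exact ih _ hlt hwt htx r hr (fun h => hwq (hsub h)) rfl

theorem Set.eq_or_eq_of_ncard_le_two {α : Type*} {s : Set α} {x y z : α} (hs : s.Finite)
    (h : s.ncard ≤ 2) (hx : x ∈ s) (hy : y ∈ s) (hxy : x ≠ y) (hz : z ∈ s) : z = x ∨ z = y := by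
  by_contra! hne
  have := (Set.two_lt_ncard_iff hs).2 ⟨x, y, z, hx, hy, hz, hxy, hne.1.symm, hne.2.symm⟩
  omega

section Digraph

variable {V : Type*} {A : V → V → Prop}

theorem IsIJDigraph.irrefl {i j : ℕ} (hD : IsIJDigraph i j A) (v : V) : ¬ A v v :=
  fun h => hD.1 v (.single h)

theorem underlyingGraph_adj_of_arc (hA : ∀ v, ¬ A v v) {a b : V} (h : A a b) :
    (underlyingGraph A).Adj a b :=
  ⟨fun e => hA a (e ▸ h), Or.inl h⟩

variable {u : V} {c : (phylogenyGraph A).Walk u u} {W : Set V}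

theorem IsHole.notMem_support_of_arcs (hA : ∀ v, ¬ A v v) (hc : IsHole (phylogenyGraph A) c)
    {a b v : V} (hab : s(a, b) ∈ c.edges) (hav : A a v) (hbv : A b v) : v ∉ c.support := by
  intro hv
  have hav' := hc.2.2 a (c.fst_mem_support_of_mem_edges hab) v hv
    (Or.inl (underlyingGraph_adj_of_arc hA hav))
  have hbv' := hc.2.2 b (c.snd_mem_support_of_mem_edges hab) v hv
    (Or.inl (underlyingGraph_adj_of_arc hA hbv))
  have := hc.1.length_eq_three_of_mem_edges hab hav' hbv'
  have := hc.2.1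
  omega

theorem ExtendingSet.notMem_support (hA : ∀ v, ¬ A v v) (hc : IsHole (phylogenyGraph A) c)
    (hW : ExtendingSet A c W) {w : V} (hw : w ∈ W) : w ∉ c.support := by
  obtain ⟨a, b, hab, -, haw, hbw⟩ := hW.1 w hw
  exact hc.notMem_support_of_arcs hA hab haw hbw

theorem ExtendingSet.mem_support_of_arc [Finite V] (hW : ExtendingSet A c W) {v w : V}
    (hw : w ∈ W) (hin : {v | A v w}.ncard ≤ 2) (hvw : A v w) : v ∈ c.support := by
  obtain ⟨a, b, hab, hcared, haw, hbw⟩ := hW.1 w hw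
  rcases Set.eq_or_eq_of_ncard_le_two (Set.toFinite _) hin haw hbw hcared.1.1 hvw
    with rfl | rfl
  exacts [c.fst_mem_support_of_mem_edges hab, c.snd_mem_support_of_mem_edges hab]

theorem ExtendingSet.not_adj [Finite V] (hD : IsIJDigraph 2 2 A)
    (hc : IsHole (phylogenyGraph A) c) (hW : ExtendingSet A c W) {w w' : V} (hw : w ∈ W)
    (hw' : w' ∈ W) : ¬ (underlyingGraph A).Adj w w' := by
  rintro ⟨-, h | h⟩
  · exact hW.notMem_support hD.irrefl hc hw (hW.mem_support_of_arc hw' (hD.2.1 w') h)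
  · exact hW.notMem_support hD.irrefl hc hw' (hW.mem_support_of_arc hw (hD.2.1 w) h)

theorem ExtendingSet.exists_walk_avoiding [Finite V] (hD : IsIJDigraph 2 2 A)
    (hc : IsHole (phylogenyGraph A) c) (hW : ExtendingSet A c W) {x y w : V}
    (hxy : s(x, y) ∈ c.edges) (hcared : CaredEdge A x y) (hw : w ∈ W) (hxw : A x w)
    (hyw : A y w) :
    ∃ q : (underlyingGraph A).Walk y x, ∀ z ∈ q.support, z ∈ ({v | v ∈ c.support} ∪ W) \ {w} := by
  have hA := hD.irrefl
  have hwc := hW.notMem_support hA hc hw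
  have hin : ∀ v, A v w → v = x ∨ v = y := fun v hv =>
    Set.eq_or_eq_of_ncard_le_two (Set.toFinite _) (hD.2.1 w) hxw hyw hcared.1.1 hv
  have hon : ∀ v ∈ c.support, v ∈ ({v | v ∈ c.support} ∪ W) \ {w} := fun v hv =>
    ⟨Or.inl hv, fun h => hwc (h ▸ hv)⟩
  obtain ⟨p, hpc, hpxy⟩ := hc.1.isTrail.exists_walk_of_mem_edges hxy
  refine p.exists_walk_support_subset_of_forall_mem_edges
    (hon y (c.snd_mem_support_of_mem_edges hxy)) fun a b hab => ?_
  have habc := hpc _ hab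
  have ha := hon a (c.fst_mem_support_of_mem_edges habc)
  have hb := hon b (c.snd_mem_support_of_mem_edges habc)
  by_cases hU : (underlyingGraph A).Adj a b
  · refine ⟨hU.toWalk, fun z hz => ?_⟩
    rcases List.mem_pair.mp (by simpa using hz) with rfl | rfl
    exacts [ha, hb]
  obtain ⟨v, hv, hav, hbv⟩ := hW.2 a b habc ⟨(p.adj_of_mem_edges hab).resolve_left hU, hU⟩
  have hvw : v ≠ w := by
    rintro rfl
    have hne := (p.adj_of_mem_edges hab).ne
    rcases hin a hav with rfl | rfl <;> rcases hin b hbv with rfl | rfl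
    · exact hne rfl
    · exact hpxy hab
    · exact hpxy (by rwa [Sym2.eq_swap])
    · exact hne rfl
  refine ⟨.cons (underlyingGraph_adj_of_arc hA hav)
    (.cons (underlyingGraph_adj_of_arc hA hbv).symm .nil), ?_⟩
  simp only [SimpleGraph.Walk.support_cons, SimpleGraph.Walk.support_nil, List.mem_cons,
    List.not_mem_nil, or_false]
  rintro z (rfl | rfl | rfl)
  exacts [ha, ⟨Or.inr hv, hvw⟩, hb]

end Digraph

/-- Let `D` be a `(2,2)` digraph whose phylogeny graph contains a hole `H`, let `W` be
a set extending `H`, and let `L` be the subgraph of the underlying graph of `D` induced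
by `V(H) ∪ W`. If `L` is chordal and `xy` is an edge of `H` taken care of by `w ∈ W`,
then there is a vertex `z` on `H` adjacent to both `x` and `w` in `L` (equivalently,
in the underlying graph of `D`, since `L` is an induced subgraph containing them). -/
theorem stmt_13 {V : Type*} [Fintype V] (A : V → V → Prop)
    (hD : IsIJDigraph 2 2 A)
    (u : V) (c : (phylogenyGraph A).Walk u u) (hH : IsHole (phylogenyGraph A) c)
    (W : Set V) (hW : ExtendingSet A c W)
    (hL : IsChordal ((underlyingGraph A).induce ({x | x ∈ c.support} ∪ W)))
    (x y : V) (hxy : s(x, y) ∈ c.edges) (hcared : CaredEdge A x y)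
    (w : V) (hw : w ∈ W) (hxw : A x w) (hyw : A y w) :
    ∃ z ∈ c.support, (underlyingGraph A).Adj z x ∧ (underlyingGraph A).Adj z w := by
  have hA := hD.irrefl
  obtain ⟨q, hq⟩ := hW.exists_walk_avoiding hD hH hxy hcared hw hxw hyw
  obtain ⟨z, hwz, hzx⟩ := hL.exists_common_neighbor (w := ⟨w, Or.inr hw⟩)
    (x := ⟨x, Or.inl (c.fst_mem_support_of_mem_edges hxy)⟩)
    (t := ⟨y, Or.inl (c.snd_mem_support_of_mem_edges hxy)⟩)
    (underlyingGraph_adj_of_arc hA hxw).symm (underlyingGraph_adj_of_arc hA hyw).symm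
    (fun h => hcared.1.1 (congrArg Subtype.val h).symm) (q.induce _ fun z hz => (hq z hz).1)
    (by simpa using fun h => (hq w h).2 rfl)
  exact ⟨z, z.2.resolve_right fun hzW => hW.not_adj hD hH hw hzW hwz, hzx, hwz.symm⟩
end
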